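/- arXiv:1705.06802 — 3 statements merged into one kernel-verified Lean document; each statement's English description precedes it below -/
import Mathlib

section
/- Let z_1,...,z_n be distinct points on the unit circle with nodal polynomial W_n(z) = ∏_{j=1}^n (z - z_j). Suppose there are positive constants B and L such that for all z on the unit circle: B ≤ |W_n'(z)|/n for each node z = z_j, and (|W_n(z)|²/n²) ∑_{j=1}^n 1/|z - z_j|² ≤ L. Then for every z on the unit circle with z ≠ z_j for all j, ∑_{j=1}^n |W_n(z)| / (|W_n'(z_j)| |z - z_j|) ≤ (√L / B) √n. -/
/-! Replacing each `|W'(z_j)|` by its lower bound `B n` turns the sum into `1/B` times the sum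
of `a_j = |W(w)| / (n |w - z_j|)`, and Cauchy–Schwarz against the constant vector gives
`∑ a_j ≤ √n (∑ a_j²)^(1/2) ≤ √n √L`. -/

open Finset

theorem Finset.sum_le_sqrt_card_mul_sqrt_sum_sq {ι : Type*} (s : Finset ι) (f : ι → ℝ) :
    ∑ i ∈ s, f i ≤ √(#s : ℝ) * √(∑ i ∈ s, f i ^ 2) := by
  rw [← Real.sqrt_mul (Nat.cast_nonneg _)]
  exact Real.le_sqrt_of_sq_le sq_sum_le_card_mul_sum_sq

theorem div_mul_le_div_mul_div_of_le_div {A c d m B : ℝ} (hA : 0 ≤ A) (hc : 0 ≤ c)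
    (hm : 0 < m) (hB : 0 < B) (h : B ≤ d / m) : A / (d * c) ≤ A / (m * c) / B := by
  rcases hc.eq_or_lt with rfl | hc
  · simp
  rw [div_div]
  refine div_le_div_of_nonneg_left hA (by positivity) ?_
  rw [mul_right_comm]
  exact mul_le_mul_of_nonneg_right ((le_div_iff₀' hm).mp h) hc.le

theorem stmt1_general (n : ℕ) (z : Fin n → ℂ)
    (W : ℂ → ℂ)
    (B L : ℝ) (hB : 0 < B)
    (h1 : ∀ j, B ≤ ‖deriv W (z j)‖ / n)
    (h2 : ∀ w : ℂ, ‖w‖ = 1 →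
      (‖W w‖) ^ 2 / (n : ℝ) ^ 2 *
        ∑ j, 1 / (‖w - z j‖) ^ 2 ≤ L) :
    ∀ w : ℂ, ‖w‖ = 1 → (∀ j, w ≠ z j) →
      ∑ j, ‖W w‖ /
          (‖deriv W (z j)‖ * ‖w - z j‖)
        ≤ Real.sqrt L / B * Real.sqrt n := by
  intro w hw _
  set a : Fin n → ℝ := fun j => ‖W w‖ / (n * ‖w - z j‖)
  have sum_sq_a : ∑ j, a j ^ 2 = ‖W w‖ ^ 2 / (n : ℝ) ^ 2 * ∑ j, 1 / ‖w - z j‖ ^ 2 := by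
    simp only [a, mul_sum, div_pow, mul_pow, mul_one_div, div_div]
  calc ∑ j, ‖W w‖ / (‖deriv W (z j)‖ * ‖w - z j‖)
      ≤ ∑ j, a j / B := sum_le_sum fun j _ =>
        div_mul_le_div_mul_div_of_le_div (norm_nonneg _) (norm_nonneg _)
          (Nat.cast_pos.mpr j.pos) hB (h1 j)
    _ = (∑ j, a j) / B := (sum_div ..).symm
    _ ≤ √n * √(∑ j, a j ^ 2) / B := by
        gcongr
        simpa using sum_le_sqrt_card_mul_sqrt_sum_sq univ a
    _ ≤ √n * √L / B := by
        gcongr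
        exact sum_sq_a ▸ h2 w hw
    _ = √L / B * √n := by ring

theorem stmt1 (n : ℕ) (hn : 0 < n) (z : Fin n → ℂ)
    (hz : ∀ j, ‖z j‖ = 1) (hinj : Function.Injective z)
    (W : ℂ → ℂ) (hW : W = fun w => ∏ j, (w - z j))
    (B L : ℝ) (hB : 0 < B) (hL : 0 < L)
    (h1 : ∀ j, B ≤ ‖deriv W (z j)‖ / n)
    (h2 : ∀ w : ℂ, ‖w‖ = 1 →
      (‖W w‖) ^ 2 / (n : ℝ) ^ 2 *
        ∑ j, 1 / (‖w - z j‖) ^ 2 ≤ L) :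
    ∀ w : ℂ, ‖w‖ = 1 → (∀ j, w ≠ z j) →
      ∑ j, ‖W w‖ /
          (‖deriv W (z j)‖ * ‖w - z j‖)
        ≤ Real.sqrt L / B * Real.sqrt n :=
  stmt1_general n z W B L hB h1 h2
end

section
/- Let f be continuous on [-1,1], F(z) = f(Re z) on 𝕋, and let L(z) ∈ Λ_{-n,n-1} be the Laurent Lagrange interpolant of F at the 2n nodes z_1,...,z_n, conj(z_1),...,conj(z_n) (z_j ∈ 𝕋, Im z_j > 0, x_j = Re z_j distinct). Then for z ∈ 𝕋 and x = Re z, L(z) = ∑_{j=1}^n f(x_j) p_n(x)/(p_n'(x_j)(x - x_j)), where p_n(x) = ∏_{j=1}^n (x - x_j); i.e., the restriction of L to 𝕋 equals the classical Lagrange interpolation polynomial l_{n-1}(f;x) composed with x = Re z. -/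
/-!
On the unit circle `Re u = (u + u⁻¹) / 2`, so the classical Lagrange interpolant `ℓ` of `f` at the
`x_j`, composed with the Joukowski map `u ↦ (u + u⁻¹) / 2`, is a Laurent polynomial in
`Λ_{-(n-1),n-1} ⊆ Λ_{-n,n-1}` that agrees with `L` at the `2n` distinct nodes `z_j`, `conj z_j`.
Multiplying by `u ^ n` turns `Λ_{-n,n-1}` into polynomials of degree at most `2n - 1`, so two of
its elements agreeing at `2n` nonzero points agree off `0`; hence `L u = ℓ (Re u)` on the circle.
-/

open Finset

/-- `T` is a Laurent polynomial in `Λ_{-p,q} = span{z^k : -p ≤ k ≤ q}`. -/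
def IsLaurent (p q : ℕ) (T : ℂ → ℂ) : Prop :=
  ∃ c : ℤ → ℂ, ∀ z : ℂ, z ≠ 0 →
    T z = ∑ k ∈ Finset.Icc (-(p : ℤ)) (q : ℤ), c k * z ^ k

open Polynomial

theorem isLaurent_iff_exists_polynomial {p q : ℕ} {T : ℂ → ℂ} :
    IsLaurent p q T ↔ ∃ P : ℂ[X], P.natDegree ≤ p + q ∧ ∀ z ≠ 0, P.eval z = z ^ p * T z := by
  constructor
  · rintro ⟨c, hc⟩
    refine ⟨∑ k ∈ Icc (-(p : ℤ)) q, C (c k) * X ^ (k + p).toNat,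
      natDegree_sum_le_of_forall_le _ _ fun k hk => ?_, fun z hz => ?_⟩
    · have := mem_Icc.1 hk
      exact (natDegree_C_mul_X_pow_le _ _).trans (by omega)
    rw [hc z hz, eval_finsetSum, mul_sum]
    refine sum_congr rfl fun k hk => ?_
    have hkp : ((k + p).toNat : ℤ) = k + p := Int.toNat_of_nonneg (by linarith [(mem_Icc.1 hk).1])
    rw [eval_C_mul, eval_X_pow, ← zpow_natCast, hkp, zpow_add₀ hz, zpow_natCast]
    ring
  · rintro ⟨P, hP, hPT⟩
    refine ⟨fun k => P.coeff (k + p).toNat, fun z hz => ?_⟩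
    have hT : T z = (z ^ p)⁻¹ * P.eval z := by
      rw [hPT z hz, inv_mul_cancel_left₀ (pow_ne_zero _ hz)]
    rw [hT, eval_eq_sum_range' (n := p + q + 1) (by omega), mul_sum]
    refine sum_nbij' (fun i => (i : ℤ) - p) (fun k => (k + p).toNat) ?_ ?_ ?_ ?_ ?_
    · intro i hi
      simp only [mem_range, mem_Icc] at hi ⊢
      omega
    · intro k hk
      simp only [mem_Icc, mem_range] at hk ⊢
      omega
    · intro i _
      simp
    · intro k hk
      simp only [mem_Icc] at hk
      omega
    · intro i _
      simp only [sub_add_cancel, Int.toNat_natCast, zpow_sub₀ hz, zpow_natCast]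
      ring

theorem IsLaurent.mono {p q p' q' : ℕ} {T : ℂ → ℂ} (hT : IsLaurent p q T) (hp : p ≤ p')
    (hq : q ≤ q') : IsLaurent p' q' T := by
  obtain ⟨P, hP, hPT⟩ := isLaurent_iff_exists_polynomial.1 hT
  refine isLaurent_iff_exists_polynomial.2 ⟨X ^ (p' - p) * P, ?_, fun z hz => ?_⟩
  · exact natDegree_mul_le.trans (by rw [natDegree_X_pow]; omega)
  · rw [eval_mul, eval_X_pow, hPT z hz, ← mul_assoc, ← pow_add, Nat.sub_add_cancel hp]

theorem IsLaurent.sub {p q : ℕ} {T S : ℂ → ℂ} (hT : IsLaurent p q T) (hS : IsLaurent p q S) :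
    IsLaurent p q (T - S) := by
  obtain ⟨c, hc⟩ := hT
  obtain ⟨d, hd⟩ := hS
  exact ⟨c - d, fun z hz => by simp [hc z hz, hd z hz, sub_mul]⟩

theorem IsLaurent.eq_of_eq_on_nodes {p q : ℕ} {T S : ℂ → ℂ} (hT : IsLaurent p q T)
    (hS : IsLaurent p q S) {ι : Type*} [Fintype ι] {v : ι → ℂ} (hv : Function.Injective v)
    (hv0 : ∀ i, v i ≠ 0) (hcard : p + q < Fintype.card ι) (hTS : ∀ i, T (v i) = S (v i))
    {z : ℂ} (hz : z ≠ 0) : T z = S z := by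
  obtain ⟨P, hP, hPT⟩ := isLaurent_iff_exists_polynomial.1 (hT.sub hS)
  have hP0 : P = 0 := eq_zero_of_natDegree_lt_card_of_eval_eq_zero P hv
    (fun i => by simp [hPT _ (hv0 i), hTS i]) (hP.trans_lt hcard)
  have := hPT z hz
  rw [hP0, eval_zero, eq_comm, mul_eq_zero, Pi.sub_apply, sub_eq_zero] at this
  exact this.resolve_left (pow_ne_zero _ hz)

theorem isLaurent_eval_add_inv_div_two {P : ℂ[X]} {m : ℕ} (hP : P.natDegree ≤ m) :
    IsLaurent m m (fun w => P.eval ((w + w⁻¹) / 2)) := by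
  obtain ⟨J, hJ, hJz⟩ : ∃ J : ℂ[X], J.natDegree ≤ 2 ∧ ∀ z ≠ 0, J.eval z = z * ((z + z⁻¹) / 2) :=
    ⟨C 2⁻¹ * (X ^ 2 + 1), by compute_degree, fun z hz => by
      simp only [eval_mul, eval_C, eval_add, eval_pow, eval_X, eval_one]
      field_simp⟩
  refine isLaurent_iff_exists_polynomial.2
    ⟨∑ k ∈ range (m + 1), C (P.coeff k) * X ^ (m - k) * J ^ k,
      natDegree_sum_le_of_forall_le _ _ fun k hk => ?_, fun z hz => ?_⟩
  · have hk := mem_range.1 hk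
    calc _ ≤ (C (P.coeff k) * X ^ (m - k)).natDegree + (J ^ k).natDegree := natDegree_mul_le
      _ ≤ (m - k) + k * 2 := add_le_add (natDegree_C_mul_X_pow_le _ _) (natDegree_pow_le_of_le k hJ)
      _ ≤ m + m := by omega
  · rw [eval_eq_sum_range' (p := P) (n := m + 1) (by omega), eval_finsetSum, mul_sum]
    refine sum_congr rfl fun k hk => ?_
    have hzm : z ^ m = z ^ (m - k) * z ^ k := by
      rw [← pow_add, Nat.sub_add_cancel (Nat.lt_succ_iff.1 (mem_range.1 hk))]
    rw [eval_mul, eval_mul, eval_C, eval_pow, eval_pow, eval_X, hJz z hz, hzm, mul_pow]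
    ring

theorem Lagrange.eval_interpolate {F ι : Type*} [Field F] [DecidableEq ι] (s : Finset ι)
    (v r : ι → F) (t : F) :
    (interpolate s v r).eval t =
      ∑ i ∈ s, r i * (∏ j ∈ s.erase i, (t - v j)) / (derivative (nodal s v)).eval (v i) := by
  rw [interpolate_apply, eval_finsetSum]
  refine sum_congr rfl fun i hi => ?_
  simp only [eval_nodal_derivative_eval_node_eq hi, eval_nodal, Lagrange.basis, basisDivisor,
    eval_mul, eval_C, eval_prod, eval_sub, eval_X, prod_mul_distrib, prod_inv_distrib]
  ring

theorem Complex.add_inv_div_two_of_norm_eq_one {w : ℂ} (hw : ‖w‖ = 1) : (w + w⁻¹) / 2 = w.re := by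
  rw [inv_eq_conj hw, add_conj]
  push_cast
  ring

theorem injective_sumElim_conj {ι : Type*} {z : ι → ℂ} (hz : Function.Injective z)
    (him : ∀ j, 0 < (z j).im) :
    Function.Injective (Sum.elim z fun j => starRingEnd ℂ (z j)) := by
  refine hz.sumElim ((RingHom.injective _).comp hz) fun i j h => ?_
  have := congrArg Complex.im h
  simp only [Complex.conj_im] at this
  linarith [him i, him j]

theorem IsLaurent.eq_of_eq_on_conj_nodes {p q : ℕ} {T S : ℂ → ℂ} (hT : IsLaurent p q T)
    (hS : IsLaurent p q S) {ι : Type*} [Fintype ι] {z : ι → ℂ} (hz : Function.Injective z)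
    (him : ∀ j, 0 < (z j).im) (hcard : p + q < 2 * Fintype.card ι)
    (h₁ : ∀ j, T (z j) = S (z j)) (h₂ : ∀ j, T (starRingEnd ℂ (z j)) = S (starRingEnd ℂ (z j)))
    {w : ℂ} (hw : w ≠ 0) : T w = S w := by
  have hz0 : ∀ j, z j ≠ 0 := fun j h => by simpa [h] using him j
  refine hT.eq_of_eq_on_nodes hS (injective_sumElim_conj hz him) ?_
    (by rwa [Fintype.card_sum, ← two_mul]) ?_ hw
  · rintro (j | j) <;> simp only [Sum.elim_inl, Sum.elim_inr, ne_eq, map_eq_zero, hz0 j,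
      not_false_eq_true]
  · rintro (j | j)
    exacts [h₁ j, h₂ j]

theorem stmt13_general (n : ℕ) (hn : 1 ≤ n) (f : ℝ → ℝ)
    (z : Fin n → ℂ) (hz : ∀ j, ‖z j‖ = 1)
    (him : ∀ j, 0 < (z j).im)
    (x : Fin n → ℝ) (hx : ∀ j, x j = (z j).re) (hxinj : Function.Injective x)
    (L : ℂ → ℂ) (hL : IsLaurent n (n - 1) L)
    (hint1 : ∀ j, L (z j) = (f (x j) : ℂ))
    (hint2 : ∀ j, L ((starRingEnd ℂ) (z j)) = (f (x j) : ℂ))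
    (pn : ℝ → ℝ) (hpn : pn = fun t => ∏ j, (t - x j)) :
    ∀ w : ℂ, ‖w‖ = 1 →
      L w = ((∑ j, f (x j) * (∏ k ∈ Finset.univ.erase j, (w.re - x k)) /
        deriv pn (x j) : ℝ) : ℂ) := by
  intro w hw
  set ℓ : ℝ[X] := Lagrange.interpolate univ x fun j => f (x j) with hℓ
  set M : ℂ → ℂ := fun u => (ℓ.map Complex.ofRealHom).eval ((u + u⁻¹) / 2) with hMdef
  have hM : IsLaurent n (n - 1) M := by
    refine (isLaurent_eval_add_inv_div_two (natDegree_map_le.trans ?_)).mono (by omega) le_rfl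
    exact natDegree_le_iff_degree_le.2 ((Lagrange.degree_interpolate_le _ hxinj.injOn).trans
      (by simp))
  have hM_circle : ∀ u : ℂ, ‖u‖ = 1 → M u = ℓ.eval u.re := fun u hu => by
    simp only [hMdef, Complex.add_inv_div_two_of_norm_eq_one hu, eval_map]
    exact eval₂_at_apply _ _
  have hnode : ∀ j, ℓ.eval (x j) = f (x j) := fun j =>
    Lagrange.eval_interpolate_at_node _ hxinj.injOn (mem_univ j)
  have hzinj : Function.Injective z := fun i j h => hxinj (by rw [hx, hx, h])
  have hLM : L w = M w := by
    refine hL.eq_of_eq_on_conj_nodes hM hzinj him (by rw [Fintype.card_fin]; omega)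
      (fun j => ?_) (fun j => ?_) (ne_zero_of_norm_ne_zero (hw ▸ one_ne_zero))
    · rw [hint1, hM_circle _ (hz j), ← hx, hnode]
    · rw [hint2, hM_circle _ (by rw [Complex.norm_conj, hz j]), Complex.conj_re, ← hx, hnode]
  have hpn' : pn = fun t => (Lagrange.nodal univ x).eval t := by
    simp only [hpn, Lagrange.eval_nodal]
  rw [hLM, hM_circle w hw, hℓ, Lagrange.eval_interpolate]
  simp only [hpn', Polynomial.deriv]

theorem stmt13 (n : ℕ) (hn : 1 ≤ n) (f : ℝ → ℝ)
    (hf : ContinuousOn f (Set.Icc (-1) 1))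
    (z : Fin n → ℂ) (hz : ∀ j, ‖z j‖ = 1)
    (him : ∀ j, 0 < (z j).im)
    (x : Fin n → ℝ) (hx : ∀ j, x j = (z j).re) (hxinj : Function.Injective x)
    (L : ℂ → ℂ) (hL : IsLaurent n (n - 1) L)
    (hint1 : ∀ j, L (z j) = (f (x j) : ℂ))
    (hint2 : ∀ j, L ((starRingEnd ℂ) (z j)) = (f (x j) : ℂ))
    (pn : ℝ → ℝ) (hpn : pn = fun t => ∏ j, (t - x j)) :
    ∀ w : ℂ, ‖w‖ = 1 →
      L w = ((∑ j, f (x j) * (∏ k ∈ Finset.univ.erase j, (w.re - x k)) /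
        deriv pn (x j) : ℝ) : ℂ) :=
  stmt13_general n hn f z hz him x hx hxinj L hL hint1 hint2 pn hpn
end

section
/- Let z_1, ..., z_n be the n-th roots of a complex number τ with |τ| = 1, so W_n(z) = z^n - τ. Then for every z on the unit circle: |W_n'(z)|/n = 1, and (|W_n(z)|²/n²) ∑_{j=1}^n 1/|z - z_j|² ≤ 1 (for z ∉ {z_1,...,z_n}). -/
/-!
By the geometric-sum factorisation, `W_n(w) / (w - z_j) = ∑_{i<n} w^(n-1-i) z_j^i`. Since the
`z_j` are all the `n`-th roots of `τ`, multiplying them by a primitive `n`-th root of unity only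
permutes them, so the power sums `∑_j z_j^m` vanish unless `n ∣ m`. For `|τ| = 1` this gives
Parseval's identity `∑_j |∑_{i<n} c_i z_j^i|² = n ∑_{i<n} |c_i|²`, and with `c_i = w^(n-1-i)`,
`|w| = 1`, the sum `∑_j |W_n(w)|² / |w - z_j|²` equals exactly `n²`.
-/

open Finset Polynomial ComplexConjugate

theorem IsPrimitiveRoot.sum_zpow_nthRoots_eq_zero {K : Type*} [Field K] [DecidableEq K]
    {n : ℕ} {ζ : K} (hζ : IsPrimitiveRoot ζ n) (τ : K) {m : ℤ} (hm : ¬ (n : ℤ) ∣ m) :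
    ∑ r ∈ (nthRoots n τ).toFinset, r ^ m = 0 := by
  rcases n.eq_zero_or_pos with rfl | hn
  · simp
  have hζ0 : ζ ≠ 0 := hζ.ne_zero hn.ne'
  set S := (nthRoots n τ).toFinset
  have hmem {u : K} (hu : u ^ n = 1) (r : K) (hr : r ∈ S) : u * r ∈ S := by
    rw [Multiset.mem_toFinset, mem_nthRoots hn] at hr ⊢
    rw [mul_pow, hu, one_mul, hr]
  have hrot : ∑ r ∈ S, r ^ m = ζ ^ m * ∑ r ∈ S, r ^ m := by
    rw [mul_sum]
    refine sum_nbij' (ζ⁻¹ * ·) (ζ * ·) (hmem (by rw [inv_pow, hζ.pow_eq_one, inv_one]))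
      (hmem hζ.pow_eq_one) (fun r _ => ?_) (fun r _ => ?_) (fun r _ => ?_) <;>
      simp [hζ0, mul_zpow, mul_inv_cancel_left₀ (zpow_ne_zero m hζ0)]
  have hζm : ζ ^ m ≠ 1 := mt (hζ.zpow_eq_one_iff_dvd m).1 hm
  have : (1 - ζ ^ m) * ∑ r ∈ S, r ^ m = 0 := by rw [sub_mul, one_mul, ← hrot, sub_self]
  exact (mul_eq_zero.1 this).resolve_left (sub_ne_zero.2 hζm.symm)

theorem image_eq_nthRoots_toFinset {K : Type*} [Field K] [DecidableEq K] {n : ℕ} (hn : 0 < n)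
    {τ : K} {z : Fin n → K} (hz : ∀ j, z j ^ n = τ) (hinj : Function.Injective z) :
    univ.image z = (nthRoots n τ).toFinset := by
  refine eq_of_subset_of_card_le (fun r hr => ?_) ?_
  · obtain ⟨j, -, rfl⟩ := mem_image.1 hr
    rw [Multiset.mem_toFinset, mem_nthRoots hn]
    exact hz j
  · rw [card_image_of_injective _ hinj, card_univ, Fintype.card_fin]
    exact (Multiset.toFinset_card_le _).trans (card_nthRoots n τ)

theorem norm_eq_one_of_pow_eq {𝕜 : Type*} [NormedDivisionRing 𝕜] {n : ℕ} (hn : n ≠ 0)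
    {x τ : 𝕜} (hτ : ‖τ‖ = 1) (hx : x ^ n = τ) : ‖x‖ = 1 :=
  (pow_eq_one_iff_of_nonneg (norm_nonneg _) hn).1 (by rw [← norm_pow, hx, hτ])

section RootsOfTau

variable {n : ℕ} {τ : ℂ} {z : Fin n → ℂ}

theorem sum_zpow_sub_eq_ite (hn : 0 < n) (hz : ∀ j, z j ^ n = τ) (hinj : Function.Injective z)
    {i k : ℕ} (hi : i < n) (hk : k < n) :
    ∑ j, z j ^ ((i : ℤ) - k) = if i = k then (n : ℂ) else 0 := by
  classical
  split_ifs with hik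
  · simp [hik]
  have hdvd : ¬ (n : ℤ) ∣ (i : ℤ) - k := fun h =>
    hik (by have := Int.eq_zero_of_abs_lt_dvd h (by rw [abs_lt]; omega); omega)
  refine (sum_image (f := (· ^ ((i : ℤ) - k))) hinj.injOn).symm.trans ?_
  rw [image_eq_nthRoots_toFinset hn hz hinj]
  exact (Complex.isPrimitiveRoot_exp n hn.ne').sum_zpow_nthRoots_eq_zero τ hdvd

theorem sum_norm_sq_sum_mul_pow (hn : 0 < n) (hτ : ‖τ‖ = 1) (hz : ∀ j, z j ^ n = τ)
    (hinj : Function.Injective z) (c : ℕ → ℂ) :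
    ∑ j, ‖∑ i ∈ range n, c i * z j ^ i‖ ^ 2 = n * ∑ i ∈ range n, ‖c i‖ ^ 2 := by
  have hexpand (j : Fin n) : (‖∑ i ∈ range n, c i * z j ^ i‖ ^ 2 : ℂ) =
      ∑ i ∈ range n, ∑ k ∈ range n, c i * conj (c k) * z j ^ ((i : ℤ) - k) := by
    have hzj : ‖z j‖ = 1 := norm_eq_one_of_pow_eq hn.ne' hτ (hz j)
    have hz0 : z j ≠ 0 := norm_ne_zero_iff.1 (by simp [hzj])
    rw [← Complex.mul_conj', map_sum, sum_mul_sum]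
    refine sum_congr rfl fun i _ => sum_congr rfl fun k _ => ?_
    rw [map_mul, map_pow, ← Complex.inv_eq_conj hzj,
      zpow_sub₀ hz0, zpow_natCast, zpow_natCast, inv_pow]
    ring
  have hC : (∑ j, ‖∑ i ∈ range n, c i * z j ^ i‖ ^ 2 : ℂ) = n * ∑ i ∈ range n, ‖c i‖ ^ 2 := by
    calc (∑ j, ‖∑ i ∈ range n, c i * z j ^ i‖ ^ 2 : ℂ)
        = ∑ i ∈ range n, ∑ k ∈ range n, c i * conj (c k) * ∑ j, z j ^ ((i : ℤ) - k) := by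
          simp_rw [hexpand, mul_sum]
          rw [sum_comm]
          exact sum_congr rfl fun i _ => sum_comm
      _ = ∑ i ∈ range n, n * (c i * conj (c i)) := by
          refine sum_congr rfl fun i hi => ?_
          rw [sum_congr rfl fun k hk => by
            rw [sum_zpow_sub_eq_ite hn hz hinj (mem_range.1 hi) (mem_range.1 hk)]]
          simp only [mul_ite, mul_zero, sum_ite_eq, hi, ↓reduceIte]
          ring
      _ = n * ∑ i ∈ range n, ‖c i‖ ^ 2 := by
          push_cast
          simp_rw [mul_sum, Complex.mul_conj']
  exact_mod_cast hC

end RootsOfTau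

theorem stmt17 (n : ℕ) (hn : 1 ≤ n) (τ : ℂ) (hτ : ‖τ‖ = 1)
    (z : Fin n → ℂ) (hz : ∀ j, z j ^ n = τ) (hinj : Function.Injective z)
    (W : ℂ → ℂ) (hW : W = fun w => w ^ n - τ) :
    ∀ w : ℂ, ‖w‖ = 1 →
      ‖deriv W w‖ / n = 1 ∧
      (w ^ n ≠ τ →
        (‖W w‖) ^ 2 / (n : ℝ) ^ 2 *
          ∑ j, 1 / (‖w - z j‖) ^ 2 ≤ 1) := by
  intro w hw
  subst hW
  have hn0 : (n : ℝ) ≠ 0 := by positivity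
  refine ⟨?_, fun hwτ => le_of_eq ?_⟩
  · simp [hw, hn0]
  have hfac (j : Fin n) : w ^ n - τ = (∑ i ∈ range n, w ^ (n - 1 - i) * z j ^ i) * (w - z j) := by
    rw [← hz j, ← geom_sum₂_mul, geom_sum₂_comm]
    exact congrArg (· * (w - z j)) (sum_congr rfl fun i _ => mul_comm _ _)
  have hsub (j : Fin n) : ‖w - z j‖ ≠ 0 := by
    rw [norm_ne_zero_iff, sub_ne_zero]
    rintro rfl
    exact hwτ (hz j)
  calc ‖w ^ n - τ‖ ^ 2 / (n : ℝ) ^ 2 * ∑ j, 1 / ‖w - z j‖ ^ 2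
      = (∑ j, ‖∑ i ∈ range n, w ^ (n - 1 - i) * z j ^ i‖ ^ 2) / (n : ℝ) ^ 2 := by
        rw [mul_sum, sum_div]
        refine sum_congr rfl fun j _ => ?_
        rw [hfac j, norm_mul]
        field_simp [hsub j]
    _ = (n * ∑ i ∈ range n, ‖w ^ (n - 1 - i)‖ ^ 2) / (n : ℝ) ^ 2 := by
        rw [sum_norm_sq_sum_mul_pow hn hτ hz hinj]
    _ = 1 := by
        simp only [norm_pow, hw, one_pow, sum_const, card_range, nsmul_eq_mul, mul_one]
        field_simp
end
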